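/- (Nondegenerate slope for the model implies quadratic set accuracy.) Let g : ℝ^d → ℝ ∪ {+∞} with X := {y : g(y) ≤ 0}, fix x̄ ∈ X and γ > 0, and let g_x̄ : ℝ^d → ℝ ∪ {+∞} be lower semicontinuous with |g_x̄(y) − g(y)| ≤ (γ/2)‖y − x̄‖² for all y (with g_x̄(y) = +∞ exactly when g(y) = +∞). Define G_x̄(y) := g_x̄(y) + (γ/2)‖y − x̄‖² and X_x̄ := {y : G_x̄(y) ≤ 0}. Assume there are constants r, κ, ε > 0 with 0 < r < ε/(2κ) such that the slope satisfies |∇G_x̄|(y) ≥ 1/κ for all y ∈ B(x̄, ε) with 0 < G_x̄(y) ≤ r. Then dist(y, X_x̄) ≤ γκ‖y − x̄‖² for all y ∈ X with ‖y − x̄‖ ≤ ν, where ν := min{ε/2, √(r/γ)}. -/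

import Mathlib

/-!
Minimise `G + (a/λ)·dist(·, y)` over the closed ball of radius `λ` around `y`, where
`G(y) ≤ a < λ/κ` (Ekeland's principle, with compactness in place of completeness). A minimiser
`z` with `G z > 0` lies in the open ball and satisfies `G z ≤ G w + (a/λ)·dist(w, z)` near `z`,
so its slope is at most `a/λ < 1/κ`, which the slope hypothesis forbids. Hence `G z ≤ 0` and
`dist(y, X_x̄) ≤ λ` for every such `λ`. For `y ∈ X` the model error bound gives
`G_x̄(y) ≤ γ‖y − x̄‖² ≤ r`, and `κ r < ε/2` keeps the whole argument inside `B(x̄, ε)`.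
-/

open Metric Filter
open scoped Topology

/-- The slope `|∇h|(x) = limsup_{y→x, y≠x} max(h(x) − h(y), 0)/‖x − y‖` of an
extended-real-valued function. -/
noncomputable def erealSlope {d : ℕ} (h : EuclideanSpace ℝ (Fin d) → EReal)
    (x : EuclideanSpace ℝ (Fin d)) : EReal :=
  Filter.limsup (fun y => max (h x - h y) 0 * (((‖x - y‖⁻¹ : ℝ)) : EReal)) (𝓝[≠] x)

/-- The model `G_x̄(y) := g_x̄(y) + (γ/2)‖y − x̄‖²` built from a model `g_x̄`. -/
noncomputable def Gmodel {d : ℕ} (gx : EuclideanSpace ℝ (Fin d) → EReal) (γ : ℝ)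
    (xb : EuclideanSpace ℝ (Fin d)) : EuclideanSpace ℝ (Fin d) → EReal :=
  fun y => gx y + ((γ / 2 * ‖y - xb‖ ^ 2 : ℝ) : EReal)

theorem EReal.max_sub_zero_mul_inv_le {x b : EReal} {δ s : ℝ} (hδ : 0 ≤ δ) (hs : 0 < s)
    (h : x ≤ b + ((δ * s : ℝ) : EReal)) :
    max (x - b) 0 * ((s⁻¹ : ℝ) : EReal) ≤ δ := by
  induction b using EReal.rec with
  | bot =>
    obtain rfl : x = ⊥ := by simpa using h
    simp [hδ]
  | top => simp [EReal.sub_top, hδ]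
  | coe b =>
    rw [← EReal.coe_add] at h
    induction x using EReal.rec with
    | bot => simp [hδ]
    | top => exact absurd h (EReal.coe_lt_top _).not_ge
    | coe x =>
      rw [EReal.coe_le_coe_iff] at h
      rw [← EReal.coe_sub, ← EReal.coe_zero, ← Monotone.map_max EReal.coe_strictMono.monotone,
        ← EReal.coe_mul, EReal.coe_le_coe_iff, ← div_eq_mul_inv, div_le_iff₀ hs]
      exact max_le (by linarith) (by positivity)

theorem LowerSemicontinuous.add_coe_real {α : Type*} [TopologicalSpace α] {f : α → EReal}
    {φ : α → ℝ} (hf : LowerSemicontinuous f) (hφ : Continuous φ) :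
    LowerSemicontinuous fun x => f x + (φ x : EReal) :=
  hf.add' (continuous_coe_real_ereal.comp hφ).lowerSemicontinuous fun _ =>
    EReal.continuousAt_add (Or.inr (EReal.coe_ne_bot _)) (Or.inr (EReal.coe_ne_top _))

theorem erealSlope_le_of_eventually_le {d : ℕ} {h : EuclideanSpace ℝ (Fin d) → EReal}
    {x : EuclideanSpace ℝ (Fin d)} {δ : ℝ} (hδ : 0 ≤ δ)
    (hle : ∀ᶠ w in 𝓝 x, h x ≤ h w + ((δ * dist w x : ℝ) : EReal)) :
    erealSlope h x ≤ δ := by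
  refine limsup_le_of_le (by isBoundedDefault) ?_
  filter_upwards [nhdsWithin_le_nhds hle, self_mem_nhdsWithin] with w hw hwx
  rw [dist_eq_norm, norm_sub_rev] at hw
  exact EReal.max_sub_zero_mul_inv_le hδ (norm_pos_iff.2 (sub_ne_zero.2 (Ne.symm hwx))) hw

theorem LowerSemicontinuous.exists_dist_le_locally_sharp {E : Type*} [MetricSpace E]
    [ProperSpace E] {G : E → EReal} (hG : LowerSemicontinuous G) {y : E} {a lam : ℝ}
    (ha : 0 ≤ a) (hlam : 0 < lam) (hy : G y ≤ a) :
    ∃ z, dist z y ≤ lam ∧ G z ≤ a ∧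
      (0 < G z → ∀ᶠ w in 𝓝 z, G z ≤ G w + ((a / lam * dist w z : ℝ) : EReal)) := by
  set δ := a / lam
  have hδ : 0 ≤ δ := by positivity
  obtain ⟨z, hz, hmin⟩ := LowerSemicontinuousOn.exists_isMinOn
    ⟨y, mem_closedBall_self hlam.le⟩ (isCompact_closedBall y lam)
    ((hG.add_coe_real (continuous_const.mul (continuous_id.dist continuous_const))
      (φ := fun w => δ * dist w y)).lowerSemicontinuousOn _)
  replace hmin : ∀ w ∈ closedBall y lam,
      G z + ((δ * dist z y : ℝ) : EReal) ≤ G w + ((δ * dist w y : ℝ) : EReal) :=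
    isMinOn_iff.1 hmin
  have hzy : G z + ((δ * dist z y : ℝ) : EReal) ≤ a := by
    simpa using (hmin y (mem_closedBall_self hlam.le)).trans (by simpa using hy)
  have hza : G z ≤ a :=
    le_trans (le_add_of_nonneg_right (EReal.coe_nonneg.2 (by positivity))) hzy
  refine ⟨z, mem_closedBall.1 hz, hza, fun hzpos => ?_⟩
  obtain ⟨c, hc⟩ : ∃ c : ℝ, G z = c :=
    ⟨_, (EReal.coe_toReal (hza.trans_lt (EReal.coe_lt_top a)).ne hzpos.ne_bot).symm⟩
  rw [hc, ← EReal.coe_add, EReal.coe_le_coe_iff] at hzy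
  have hc0 : 0 < c := by exact_mod_cast hc ▸ hzpos
  have hzy_lt : dist z y < lam := by
    by_contra! h
    have : a ≤ δ * dist z y := by
      rw [div_mul_eq_mul_div, le_div_iff₀ hlam]; exact mul_le_mul_of_nonneg_left h ha
    linarith
  filter_upwards [isOpen_ball.mem_nhds (mem_ball.2 hzy_lt)] with w hw
  have hw_min := hmin w (ball_subset_closedBall hw)
  have htri : δ * dist w y ≤ δ * dist w z + δ * dist z y := by
    rw [← mul_add]; exact mul_le_mul_of_nonneg_left (dist_triangle w z y) hδ
  rw [← (EReal.addLECancellable_coe (δ * dist z y)).add_le_add_iff_right, hc,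
    ← EReal.coe_add]
  calc ((c + δ * dist z y : ℝ) : EReal) ≤ G w + ((δ * dist w y : ℝ) : EReal) := by
        rwa [EReal.coe_add, ← hc]
    _ ≤ G w + ((δ * dist w z + δ * dist z y : ℝ) : EReal) := by gcongr
    _ = G w + ((δ * dist w z : ℝ) : EReal) + ((δ * dist z y : ℝ) : EReal) := by
        rw [EReal.coe_add, add_assoc]

theorem infDist_sublevel_le_of_slope {d : ℕ} {G : EuclideanSpace ℝ (Fin d) → EReal}
    (hG : LowerSemicontinuous G) {y : EuclideanSpace ℝ (Fin d)} {κ a ρ : ℝ} (hκ : 0 < κ)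
    (ha : 0 ≤ a) (hy : G y ≤ a) (hρ : κ * a < ρ)
    (hslope : ∀ z, dist z y < ρ → 0 < G z → G z ≤ a →
      ((1 / κ : ℝ) : EReal) ≤ erealSlope G z) :
    infDist y {z | G z ≤ 0} ≤ κ * a := by
  refine le_of_forall_gt_imp_ge_of_dense fun c hc => ?_
  obtain ⟨lam, hlam, hlam_lt⟩ := exists_between (lt_min hc hρ)
  have hlam0 : 0 < lam := (by positivity : 0 ≤ κ * a).trans_lt hlam
  obtain ⟨z, hzy, hza, hsharp⟩ := hG.exists_dist_le_locally_sharp ha hlam0 hy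
  by_cases hz : G z ≤ 0
  · calc infDist y {z | G z ≤ 0} ≤ dist y z := infDist_le_dist_of_mem hz
      _ ≤ c := by rw [dist_comm]; exact hzy.trans (hlam_lt.le.trans (min_le_left _ _))
  · have hzpos : 0 < G z := not_le.1 hz
    have hslope_le : erealSlope G z ≤ ((a / lam : ℝ) : EReal) :=
      erealSlope_le_of_eventually_le (by positivity) (hsharp hzpos)
    have hlt : a / lam < 1 / κ := by
      rw [div_lt_div_iff₀ hlam0 hκ]; linarith
    have := hslope z (hzy.trans_lt (hlam_lt.trans_le (min_le_right _ _))) hzpos hza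
    exact absurd (EReal.coe_le_coe_iff.1 (this.trans hslope_le)) (not_le.2 hlt)

theorem LowerSemicontinuous.Gmodel {d : ℕ} {gx : EuclideanSpace ℝ (Fin d) → EReal}
    (hgx : LowerSemicontinuous gx) (γ : ℝ) (xb : EuclideanSpace ℝ (Fin d)) :
    LowerSemicontinuous (Gmodel gx γ xb) :=
  hgx.add_coe_real (continuous_const.mul ((continuous_id.sub continuous_const).norm.pow 2))

theorem Gmodel_le_of_nonpos {d : ℕ} {g gx : EuclideanSpace ℝ (Fin d) → EReal} {γ : ℝ}
    {xb y : EuclideanSpace ℝ (Fin d)}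
    (happ : gx y ≤ g y + ((γ / 2 * ‖y - xb‖ ^ 2 : ℝ) : EReal)) (hgy : g y ≤ 0) :
    Gmodel gx γ xb y ≤ ((γ * ‖y - xb‖ ^ 2 : ℝ) : EReal) :=
  calc Gmodel gx γ xb y
      ≤ g y + ((γ / 2 * ‖y - xb‖ ^ 2 : ℝ) : EReal) + ((γ / 2 * ‖y - xb‖ ^ 2 : ℝ) : EReal) :=
        add_le_add_left happ _
    _ ≤ 0 + ((γ / 2 * ‖y - xb‖ ^ 2 : ℝ) : EReal) + ((γ / 2 * ‖y - xb‖ ^ 2 : ℝ) : EReal) := by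
        gcongr
    _ = ((γ * ‖y - xb‖ ^ 2 : ℝ) : EReal) := by
        rw [zero_add, ← EReal.coe_add]; ring_nf

theorem nondegenerate_slope_implies_set_accuracy_general
    {d : ℕ} (g gx : EuclideanSpace ℝ (Fin d) → EReal)
    (hgxlsc : LowerSemicontinuous gx)
    (γ κ r ε : ℝ) (hγ : 0 < γ) (hκ : 0 < κ) (hr : 0 < r)
    (hrε : r < ε / (2 * κ))
    (xb : EuclideanSpace ℝ (Fin d))
    (happ₁ : ∀ y, gx y ≤ g y + ((γ / 2 * ‖y - xb‖ ^ 2 : ℝ) : EReal))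
    (hslope : ∀ y, ‖y - xb‖ ≤ ε → (0 : EReal) < Gmodel gx γ xb y →
      Gmodel gx γ xb y ≤ (r : EReal) →
      ((1 / κ : ℝ) : EReal) ≤ erealSlope (Gmodel gx γ xb) y) :
    ∀ y, g y ≤ 0 → ‖y - xb‖ ≤ min (ε / 2) (Real.sqrt (r / γ)) →
      infDist y {z | Gmodel gx γ xb z ≤ 0} ≤ γ * κ * ‖y - xb‖ ^ 2 := by
  intro y hgy hy
  have ht : ‖y - xb‖ ≤ ε / 2 := hy.trans (min_le_left _ _)
  have hγt : γ * ‖y - xb‖ ^ 2 ≤ r := by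
    have := (Real.le_sqrt (norm_nonneg _) (div_pos hr hγ).le).1 (hy.trans (min_le_right _ _))
    rwa [le_div_iff₀ hγ, mul_comm] at this
  have hκr : κ * r < ε / 2 := by
    rw [lt_div_iff₀ (by positivity)] at hrε; linarith
  refine (infDist_sublevel_le_of_slope (ρ := ε / 2) (hgxlsc.Gmodel γ xb) hκ (by positivity)
    (Gmodel_le_of_nonpos (happ₁ y) hgy) (by nlinarith)
    fun z hz hGz hGza => hslope z ?_ hGz (hGza.trans (EReal.coe_le_coe_iff.2 hγt))).trans_eq
    (by ring)
  calc ‖z - xb‖ ≤ dist z y + ‖y - xb‖ := by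
        rw [dist_eq_norm]; exact norm_sub_le_norm_sub_add_norm_sub z y xb
    _ ≤ ε := by linarith

/-- **Nondegenerate slope for the model implies quadratic set
accuracy.** -/
theorem nondegenerate_slope_implies_set_accuracy
    {d : ℕ} (g gx : EuclideanSpace ℝ (Fin d) → EReal)
    (hgbot : ∀ y, g y ≠ ⊥) (hgxbot : ∀ y, gx y ≠ ⊥)
    (hgxlsc : LowerSemicontinuous gx)
    (γ κ r ε : ℝ) (hγ : 0 < γ) (hκ : 0 < κ) (hr : 0 < r) (hε : 0 < ε)
    (hrε : r < ε / (2 * κ))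
    (xb : EuclideanSpace ℝ (Fin d)) (hxb : g xb ≤ 0)
    (htop : ∀ y, (gx y = ⊤ ↔ g y = ⊤))
    (happ₁ : ∀ y, gx y ≤ g y + ((γ / 2 * ‖y - xb‖ ^ 2 : ℝ) : EReal))
    (happ₂ : ∀ y, g y ≤ gx y + ((γ / 2 * ‖y - xb‖ ^ 2 : ℝ) : EReal))
    (hslope : ∀ y, ‖y - xb‖ ≤ ε → (0 : EReal) < Gmodel gx γ xb y →
      Gmodel gx γ xb y ≤ (r : EReal) →
      ((1 / κ : ℝ) : EReal) ≤ erealSlope (Gmodel gx γ xb) y) :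
    ∀ y, g y ≤ 0 → ‖y - xb‖ ≤ min (ε / 2) (Real.sqrt (r / γ)) →
      infDist y {z | Gmodel gx γ xb z ≤ 0} ≤ γ * κ * ‖y - xb‖ ^ 2 :=
  nondegenerate_slope_implies_set_accuracy_general g gx hgxlsc γ κ r ε hγ hκ hr hrε xb happ₁ hslope
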